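/- For any impartial game with activeness G^g: if type(G^g)=0 then 𝒢^𝟘(G^g)=ℤ≥0; if type(G^g)=1_{∃0} then 𝒢^𝟘(G^g)=∅; and if type(G^g)=1_{∀1} then 𝒢^𝟘(G^g) is the singleton {mex ∪ 𝒢^𝟘(G'^{g'})} where the union is over options G'^{g'} of G^g with type(G'^{g'})=1_{∀1}. -/

import Mathlib

inductive AGame : Type where
  | mk : List AGame → Bool → AGame

namespace AGame

noncomputable instance : DecidableEq AGame := Classical.decEq _

def opts : AGame → List AGame | mk gs _ => gs
def act : AGame → Bool | mk _ g => g

theorem sizeOf_lt_of_mem {G G' : AGame} (h : G' ∈ G.opts) : sizeOf G' < sizeOf G := by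
  cases G with
  | mk gs g =>
    simp only [opts] at h
    have := List.sizeOf_lt_of_mem h
    simp [AGame.mk.sizeOf_spec]
    omega

/-- Disjunctive sum of games with activeness. -/
def add (G H : AGame) : AGame :=
  mk (G.opts.attach.map (fun x => add x.1 H) ++
      H.opts.attach.map (fun y => add G y.1)) (G.act || H.act)
termination_by sizeOf G + sizeOf H
decreasing_by
  · have := sizeOf_lt_of_mem x.2; omega
  · have := sizeOf_lt_of_mem y.2; omega

/-- `PPos G` means the outcome of `G` is 𝒫 (second player wins). -/
def PPos (G : AGame) : Prop :=
  G.act = false ∨ ∀ G' ∈ G.opts.attach, ¬ PPos G'.1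
termination_by sizeOf G
decreasing_by
  have := sizeOf_lt_of_mem G'.2; omega

/-- Hereditary set-equality (the paper's ≅). -/
def Identical (G H : AGame) : Prop :=
  G.act = H.act ∧ (∀ G' ∈ G.opts.attach, ∃ H' ∈ H.opts.attach, Identical G'.1 H'.1)
              ∧ (∀ H' ∈ H.opts.attach, ∃ G' ∈ G.opts.attach, Identical G'.1 H'.1)
termination_by sizeOf G + sizeOf H
decreasing_by
  · have := sizeOf_lt_of_mem G'.2; have := sizeOf_lt_of_mem H'.2; omega
  · have := sizeOf_lt_of_mem G'.2; have := sizeOf_lt_of_mem H'.2; omega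

/-- Equivalence of games with activeness: same outcome in every sum. -/
def Equiv (G H : AGame) : Prop := ∀ X : AGame, (PPos (add G X) ↔ PPos (add H X))

end AGame

namespace AGame

/-- Nimbers with activeness: `star γ n ≅ {star γ j : j < n}^{γ n}`. -/
def star (γ : ℕ → Bool) : ℕ → AGame
  | n => mk ((List.range n).attach.map (fun j => star γ j.1)) (γ n)
termination_by n => n
decreasing_by
  have := j.2; simp [List.mem_range] at this; omega

/-- The generalized Grundy set `𝒢^γ(G)`. -/
def GSet (γ : ℕ → Bool) (G : AGame) : Set ℕ := {n | PPos (add G (star γ n))}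

/-- Minimum excludant of a set of naturals. -/
noncomputable def mex (S : Set ℕ) : ℕ := sInf {n | n ∉ S}

/-- Ordinary Grundy value, computed ignoring activeness. -/
noncomputable def grundy (G : AGame) : ℕ :=
  mex {m | ∃ G' ∈ G.opts.attach, grundy G'.1 = m}
termination_by sizeOf G
decreasing_by
  have := sizeOf_lt_of_mem G'.2; omega

/-- The three types of games with activeness. -/
inductive AType : Type where
  | inactive : AType            -- type 0
  | activeSomeInactive : AType  -- type 1_{∃0}
  | activeAllActive : AType     -- type 1_{∀1}

open Classical in
/-- `type(G^g)`. -/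
noncomputable def typ (G : AGame) : AType :=
  if G.act = false then .inactive
  else if ∃ G' ∈ G.opts, G'.act = false then .activeSomeInactive
  else .activeAllActive

/-- Formal birthday `b(G)`. -/
def bday (G : AGame) : ℕ :=
  (G.opts.attach.map (fun G' => bday G'.1 + 1)).foldr max 0
termination_by sizeOf G
decreasing_by
  have := sizeOf_lt_of_mem G'.2; omega

/-- An option `G'` of `G` is reversible if it has an option equivalent to `G`. -/
def Reversible (G G' : AGame) : Prop := ∃ G'' ∈ G'.opts, Equiv G'' G

/-- A canonical game: all options canonical and no option reversible. -/
def Canonical (G : AGame) : Prop :=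
  (∀ G' ∈ G.opts.attach, Canonical G'.1) ∧ (∀ G' ∈ G.opts, ¬ Reversible G G')
termination_by sizeOf G
decreasing_by
  have := sizeOf_lt_of_mem G'.2; omega

/-- A transitive game: all options transitive and options of options are options. -/
def TransGame (G : AGame) : Prop :=
  (∀ G' ∈ G.opts.attach, TransGame G'.1) ∧ (∀ G' ∈ G.opts, ∀ G'' ∈ G'.opts, G'' ∈ G.opts)
termination_by sizeOf G
decreasing_by
  have := sizeOf_lt_of_mem G'.2; omega

/-- `G` is covered by `H` if every option of `G` is equivalent to some option of `H`. -/
def Covered (G H : AGame) : Prop := ∀ G' ∈ G.opts, ∃ H' ∈ H.opts, Equiv G' H'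

/-- The relation `G ⋈ H`. -/
def Bowtie (G H : AGame) : Prop :=
  (∀ G' ∈ G.opts, ¬ Equiv G' H) ∧ (∀ H' ∈ H.opts, ¬ Equiv G H')

/-- The linear chain `∅^{g₀ g₁ … gₙ}`. -/
def chain (g : ℕ → Bool) : ℕ → AGame
  | 0 => mk [] (g 0)
  | n + 1 => mk [chain g n] (g (n + 1))

end AGame

/-! If `G` is inactive, `G + *n` is inactive and hence a 𝒫-position. If `G` is active with an
inactive option `G₀`, the move to the inactive position `G₀ + *n` wins, so `G + *n` is never 𝒫.
If `G` and all its options are active, `G + *n` is 𝒫 iff no `G' + *n` and no `G + *j` (`j < n`)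
is; options of type `1_{∃0}` contribute nothing, so `𝒢^𝟘(G)` is the least `n` outside the union
`S` of the sets `𝒢^𝟘(G')` over options of type `1_{∀1}`. This `n` exists because `S` is finite:
the same recursion shows that the Grundy set `𝒢^γ` of an active game has at most one element. -/

namespace AGame

lemma act_add (G H : AGame) : (add G H).act = (G.act || H.act) := by
  rw [add]; rfl

lemma opts_add (G H : AGame) :
    (add G H).opts = G.opts.map (add · H) ++ H.opts.map (add G ·) := by
  rw [add]; simp [opts]

lemma act_star (γ : ℕ → Bool) (n : ℕ) : (star γ n).act = γ n := by
  rw [star]; rfl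

lemma opts_star (γ : ℕ → Bool) (n : ℕ) : (star γ n).opts = (List.range n).map (star γ) := by
  rw [star]; simp [opts]

lemma pPos_iff (G : AGame) : PPos G ↔ G.act = false ∨ ∀ G' ∈ G.opts, ¬ PPos G' := by
  rw [PPos]; simp

lemma typ_eq_inactive_iff (G : AGame) : typ G = .inactive ↔ G.act = false := by
  unfold typ; split_ifs <;> simp_all

lemma typ_eq_activeSomeInactive_iff (G : AGame) :
    typ G = .activeSomeInactive ↔ G.act = true ∧ ∃ G' ∈ G.opts, G'.act = false := by
  unfold typ; split_ifs <;> simp_all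

lemma typ_eq_activeAllActive_iff (G : AGame) :
    typ G = .activeAllActive ↔ G.act = true ∧ ∀ G' ∈ G.opts, G'.act = true := by
  unfold typ; split_ifs <;> simp_all

lemma mex_notMem {S : Set ℕ} (hS : Sᶜ.Nonempty) : mex S ∉ S := Nat.sInf_mem hS

lemma mex_le_of_notMem {S : Set ℕ} {n : ℕ} (hn : n ∉ S) : mex S ≤ n := Nat.sInf_le hn

lemma eq_singleton_mex {S T : Set ℕ} (hS : Sᶜ.Nonempty)
    (hT : ∀ n, n ∈ T ↔ n ∉ S ∧ ∀ j < n, j ∉ T) : T = {mex S} := by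
  ext n
  induction n using Nat.strong_induction_on with
  | _ n ih =>
    rw [hT, Set.mem_singleton_iff]
    constructor
    · rintro ⟨hnS, hlt⟩
      refine (mex_le_of_notMem hnS).eq_or_lt.elim Eq.symm fun hlt' => ?_
      exact absurd ((ih _ hlt').mpr rfl) (hlt _ hlt')
    · rintro rfl
      exact ⟨mex_notMem hS, fun j hj hjT => hj.ne ((ih j hj).mp hjT)⟩

lemma pPos_add_of_act_eq_false {G H : AGame} (hG : G.act = false) (hH : H.act = false) :
    PPos (add G H) :=
  (pPos_iff _).mpr (Or.inl (by simp [act_add, hG, hH]))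

lemma not_pPos_add_of_mem_opts {G G₀ X : AGame} (hG : G.act = true) (hG₀ : G₀ ∈ G.opts)
    (hG₀a : G₀.act = false) (hX : X.act = false) : ¬ PPos (add G X) := by
  rw [pPos_iff, not_or, not_forall₂]
  refine ⟨by simp [act_add, hG], add G₀ X, ?_, not_not_intro (pPos_add_of_act_eq_false hG₀a hX)⟩
  rw [opts_add]
  exact List.mem_append_left _ (List.mem_map_of_mem hG₀)

lemma mem_gSet_iff_of_act {γ : ℕ → Bool} {G : AGame} (hG : G.act = true) (n : ℕ) :
    n ∈ GSet γ G ↔ (∀ G' ∈ G.opts, n ∉ GSet γ G') ∧ ∀ j < n, j ∉ GSet γ G := by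
  simp only [GSet, Set.mem_ofPred_eq]
  rw [pPos_iff, act_add, hG, Bool.true_or, opts_add, opts_star]
  simp [or_imp, forall_and]

lemma gSet_subsingleton_of_act {γ : ℕ → Bool} {G : AGame} (hG : G.act = true) :
    (GSet γ G).Subsingleton := by
  intro m hm n hn
  by_contra hne
  rcases lt_or_gt_of_ne hne with h | h
  · exact ((mem_gSet_iff_of_act hG n).mp hn).2 m h hm
  · exact ((mem_gSet_iff_of_act hG m).mp hm).2 n h hn

lemma gSet_zero_eq_univ {G : AGame} (h : typ G = .inactive) :
    GSet (fun _ => false) G = Set.univ :=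
  Set.eq_univ_of_forall fun n =>
    pPos_add_of_act_eq_false ((typ_eq_inactive_iff G).mp h) (act_star _ n)

lemma gSet_zero_eq_empty {G : AGame} (h : typ G = .activeSomeInactive) :
    GSet (fun _ => false) G = ∅ := by
  obtain ⟨hG, G₀, hG₀, hG₀a⟩ := (typ_eq_activeSomeInactive_iff G).mp h
  exact Set.eq_empty_of_forall_notMem fun n =>
    not_pPos_add_of_mem_opts hG hG₀ hG₀a (act_star _ n)

lemma typ_eq_activeAllActive_of_mem_gSet_zero {G : AGame} {n : ℕ} (hG : G.act = true)
    (hn : n ∈ GSet (fun _ => false) G) : typ G = .activeAllActive := by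
  cases h : typ G with
  | inactive => simp [(typ_eq_inactive_iff G).mp h] at hG
  | activeSomeInactive => simp [gSet_zero_eq_empty h] at hn
  | activeAllActive => rfl

lemma gSet_zero_eq_singleton_mex {G : AGame} (h : typ G = .activeAllActive) :
    GSet (fun _ => false) G =
      {mex {m | ∃ G' ∈ G.opts, typ G' = .activeAllActive ∧ m ∈ GSet (fun _ => false) G'}} := by
  obtain ⟨hG, hopts⟩ := (typ_eq_activeAllActive_iff G).mp h
  set S := {m | ∃ G' ∈ G.opts, typ G' = .activeAllActive ∧ m ∈ GSet (fun _ => false) G'}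
  have hS : S.Finite := by
    have hT : {G' | G' ∈ G.opts ∧ typ G' = .activeAllActive}.Finite :=
      G.opts.finite_toSet.subset fun _ h => h.1
    refine (hT.biUnion fun G' hG' =>
      (gSet_subsingleton_of_act (γ := fun _ => false) (hopts G' hG'.1)).finite).subset ?_
    rintro m ⟨G', hG', hG'typ, hm⟩
    exact Set.mem_biUnion ⟨hG', hG'typ⟩ hm
  refine eq_singleton_mex hS.infinite_compl.nonempty fun n => ?_
  rw [mem_gSet_iff_of_act hG]
  refine and_congr_left' ⟨fun hn ⟨G', hG', _, hnG'⟩ => hn G' hG' hnG', fun hn G' hG' hnG' => ?_⟩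
  exact hn ⟨G', hG', typ_eq_activeAllActive_of_mem_gSet_zero (hopts G' hG') hnG', hnG'⟩

end AGame

/-- `𝒢^𝟘` according to the type of the game: `ℤ≥0` for inactive games, `∅` for active
games with an inactive option, and a mex-singleton for active games all of whose
options are active. -/
theorem AGame.gset_zeros (G : AGame) :
    (AGame.typ G = AGame.AType.inactive → AGame.GSet (fun _ => false) G = Set.univ) ∧
    (AGame.typ G = AGame.AType.activeSomeInactive → AGame.GSet (fun _ => false) G = ∅) ∧
    (AGame.typ G = AGame.AType.activeAllActive →
      AGame.GSet (fun _ => false) G =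
        {AGame.mex {m : ℕ | ∃ G' ∈ G.opts, AGame.typ G' = AGame.AType.activeAllActive ∧
            m ∈ AGame.GSet (fun _ => false) G'}}) :=
  ⟨AGame.gSet_zero_eq_univ, AGame.gSet_zero_eq_empty, AGame.gSet_zero_eq_singleton_mex⟩
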